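/- arXiv:2210.12558 — 3 statements merged into one kernel-verified Lean document; each statement's English description precedes it below -/
import Mathlib

section
/- Let Q be an n×n real symmetric matrix whose off-diagonal entries are all nonpositive, and let λ_1 ≥ λ_2 ≥ ... ≥ λ_n be its eigenvalues listed in nonincreasing order. Then for every binary vector x ∈ {0,1}^n with exactly p entries equal to 1 (i.e. Σ_{i=1}^n x_i = p), the quadratic form satisfies xᵗ Q x ≤ Σ_{i=1}^p λ_i, the sum of the p largest eigenvalues of Q. -/
/-!
Because the off-diagonal entries are nonpositive and `x ≥ 0`, dropping them gives
`xᵗ Q x ≤ ∑ᵢ xᵢ Qᵢᵢ`. Writing `Q = U diag(λ) Uᵗ` with `U` orthogonal, this diagonal sum is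
`∑ₖ λₖ dₖ` with weights `dₖ = ∑ᵢ xᵢ Uᵢₖ²`; orthogonality of the rows and columns of `U` puts every
`dₖ` in `[0, 1]` and makes them sum to `p`. As in the fractional knapsack problem, a linear
function of such weights is largest when weight `1` sits on the `p` largest eigenvalues.
-/

open Matrix Finset

theorem Matrix.dotProduct_mulVec_le_sum_diag_mul_sq {ι R : Type*} [Fintype ι] [CommRing R]
    [PartialOrder R] [IsOrderedRing R] {A : Matrix ι ι R} (hA : ∀ i j, i ≠ j → A i j ≤ 0)
    {x : ι → R} (hx : 0 ≤ x) :
    x ⬝ᵥ A *ᵥ x ≤ ∑ i, A i i * x i ^ 2 := by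
  classical
  refine sum_le_sum fun i _ => ?_
  rw [mulVec, dotProduct, mul_sum, ← add_sum_erase _ _ (mem_univ i)]
  have hoff : ∑ j ∈ univ.erase i, x i * (A i j * x j) ≤ 0 :=
    sum_nonpos fun j hj => mul_nonpos_of_nonneg_of_nonpos (hx i)
      (mul_nonpos_of_nonpos_of_nonneg (hA i j (ne_of_mem_erase hj).symm) (hx j))
  rw [show x i * (A i i * x i) = A i i * x i ^ 2 by ring]
  exact add_le_of_nonpos_right hoff

theorem sum_mul_le_sum_of_threshold {ι : Type*} [Fintype ι] [DecidableEq ι] (s : Finset ι)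
    {lam e : ι → ℝ} (t : ℝ)
    (hs : ∀ i ∈ s, t ≤ lam i) (hsc : ∀ i ∉ s, lam i ≤ t) (he0 : 0 ≤ e) (he1 : e ≤ 1)
    (hsum : ∑ i, e i = #s) :
    ∑ i, lam i * e i ≤ ∑ i ∈ s, lam i := by
  have hin : 0 ≤ ∑ i ∈ s, (lam i - t) * (1 - e i) :=
    sum_nonneg fun i hi => mul_nonneg (sub_nonneg.2 (hs i hi)) (sub_nonneg.2 (he1 i))
  have hout : 0 ≤ ∑ i ∈ sᶜ, (t - lam i) * e i :=
    sum_nonneg fun i hi => mul_nonneg (sub_nonneg.2 (hsc i (mem_compl.1 hi))) (he0 i)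
  have hsplit : t * ∑ i ∈ s, e i + t * ∑ i ∈ sᶜ, e i = #s * t := by
    rw [← mul_add, sum_add_sum_compl, hsum, mul_comm]
  rw [← sum_add_sum_compl s (fun i => lam i * e i)]
  simp only [sub_mul, mul_sub, mul_one, sum_sub_distrib, ← mul_sum, sum_const, nsmul_eq_mul]
    at hin hout
  linarith

theorem Antitone.sum_mul_le_sum_lt {n p : ℕ} {lam e : Fin n → ℝ} (hlam : Antitone lam)
    (he0 : 0 ≤ e) (he1 : e ≤ 1) (hsum : ∑ i, e i = p) :
    ∑ i, lam i * e i ≤ ∑ i ∈ univ.filter (fun i : Fin n => (i : ℕ) < p), lam i := by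
  have hpn : p ≤ n := by
    have : ∑ i, e i ≤ ∑ _i : Fin n, (1 : ℝ) := sum_le_sum fun i _ => he1 i
    simp only [hsum, sum_const, card_univ, Fintype.card_fin, nsmul_eq_mul, mul_one] at this
    exact_mod_cast this
  rcases n.eq_zero_or_pos with rfl | hn
  · simp
  let t := lam ⟨min p (n - 1), by omega⟩
  refine sum_mul_le_sum_of_threshold _ t (fun i hi => hlam ?_) (fun i hi => hlam ?_) he0 he1 ?_
  · simp only [mem_filter, mem_univ, true_and] at hi
    simp only [Fin.le_def]; omega
  · simp only [mem_filter, mem_univ, true_and, not_lt] at hi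
    simp only [Fin.le_def]; omega
  · rw [Fin.card_filter_val_lt, min_eq_right hpn, hsum]

namespace Matrix.IsHermitian
variable {ι : Type*} [Fintype ι] [DecidableEq ι] {A : Matrix ι ι ℝ} (hA : A.IsHermitian)

noncomputable def spectralWeight (w : ι → ℝ) (k : ι) : ℝ :=
  ∑ i, w i * (hA.eigenvectorUnitary : Matrix ι ι ℝ) i k ^ 2

theorem apply_self_eq_sum_eigenvalues (i : ι) :
    A i i = ∑ k, hA.eigenvalues k * (hA.eigenvectorUnitary : Matrix ι ι ℝ) i k ^ 2 := by
  conv_lhs => rw [hA.spectral_theorem]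
  simp [Unitary.conjStarAlgAut_apply, mul_apply, diagonal_apply, sq, mul_comm, mul_left_comm]

theorem sum_eigenvectorUnitary_sq_row (i : ι) :
    ∑ k, (hA.eigenvectorUnitary : Matrix ι ι ℝ) i k ^ 2 = 1 := by
  have := congr_fun₂ (mem_unitaryGroup_iff.1 hA.eigenvectorUnitary.2) i i
  simpa [mul_apply, sq] using this

theorem sum_eigenvectorUnitary_sq_col (k : ι) :
    ∑ i, (hA.eigenvectorUnitary : Matrix ι ι ℝ) i k ^ 2 = 1 := by
  have := congr_fun₂ (mem_unitaryGroup_iff'.1 hA.eigenvectorUnitary.2) k k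
  simpa [mul_apply, sq] using this

theorem sum_mul_apply_self_eq_sum_eigenvalues_mul_spectralWeight (w : ι → ℝ) :
    ∑ i, w i * A i i = ∑ k, hA.eigenvalues k * hA.spectralWeight w k := by
  simp only [apply_self_eq_sum_eigenvalues hA, spectralWeight, mul_sum]
  rw [sum_comm]
  exact sum_congr rfl fun _ _ => sum_congr rfl fun i _ => by ring

theorem spectralWeight_nonneg {w : ι → ℝ} (hw : 0 ≤ w) : 0 ≤ hA.spectralWeight w :=
  fun _ => sum_nonneg fun i _ => mul_nonneg (hw i) (sq_nonneg _)

theorem spectralWeight_le_one {w : ι → ℝ} (hw : w ≤ 1) : hA.spectralWeight w ≤ 1 := fun k =>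
  calc hA.spectralWeight w k ≤ ∑ i, (hA.eigenvectorUnitary : Matrix ι ι ℝ) i k ^ 2 :=
        sum_le_sum fun i _ => mul_le_of_le_one_left (sq_nonneg _) (hw i)
    _ = 1 := hA.sum_eigenvectorUnitary_sq_col k

theorem sum_spectralWeight (w : ι → ℝ) : ∑ k, hA.spectralWeight w k = ∑ i, w i := by
  simp only [spectralWeight]
  rw [sum_comm]
  exact sum_congr rfl fun i _ => by rw [← mul_sum, hA.sum_eigenvectorUnitary_sq_row, mul_one]

end Matrix.IsHermitian

/-- For a real symmetric `n × n` matrix `Q` with nonpositive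
off-diagonal entries and eigenvalues `lam 0 ≥ lam 1 ≥ ... ≥ lam (n-1)`
(listed in nonincreasing order, with multiplicity), every binary vector
`x ∈ {0,1}^n` with exactly `p` ones satisfies
`xᵗ Q x ≤ ∑_{k < p} lam k` (the sum of the `p` largest eigenvalues). -/
theorem stmt0 {n : ℕ} (Q : Matrix (Fin n) (Fin n) ℝ) (hQ : Q.IsHermitian)
    (hoff : ∀ i j : Fin n, i ≠ j → Q i j ≤ 0)
    (lam : Fin n → ℝ) (hlam : Antitone lam)
    (σ : Equiv.Perm (Fin n)) (hσ : ∀ i, lam (σ i) = hQ.eigenvalues i)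
    (x : Fin n → ℝ) (hx : ∀ i, x i = 0 ∨ x i = 1)
    (p : ℕ) (hp : ∑ i, x i = p) :
    x ⬝ᵥ Q.mulVec x ≤ ∑ k ∈ Finset.univ.filter (fun i : Fin n => (i : ℕ) < p), lam k := by
  have hx0 : 0 ≤ x := fun i => by rcases hx i with h | h <;> simp [h]
  have hx1 : x ≤ 1 := fun i => by rcases hx i with h | h <;> simp [h]
  have hxsq : ∀ i, x i ^ 2 = x i := fun i => by rcases hx i with h | h <;> simp [h]
  let e := hQ.spectralWeight x ∘ σ.symm
  have he0 : 0 ≤ e := fun k => hQ.spectralWeight_nonneg hx0 (σ.symm k)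
  have he1 : e ≤ 1 := fun k => hQ.spectralWeight_le_one hx1 (σ.symm k)
  have hesum : ∑ k, e k = p := (σ.symm.sum_comp _).trans ((hQ.sum_spectralWeight x).trans hp)
  calc x ⬝ᵥ Q *ᵥ x ≤ ∑ i, Q i i * x i ^ 2 := dotProduct_mulVec_le_sum_diag_mul_sq hoff hx0
    _ = ∑ i, x i * Q i i := sum_congr rfl fun i _ => by rw [hxsq, mul_comm]
    _ = ∑ k, hQ.eigenvalues k * hQ.spectralWeight x k :=
        hQ.sum_mul_apply_self_eq_sum_eigenvalues_mul_spectralWeight x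
    _ = ∑ k, lam k * e k := Fintype.sum_equiv σ _ _ fun k => by simp [e, hσ]
    _ ≤ _ := hlam.sum_mul_le_sum_lt he0 he1 hesum
end

section
/- Let Q be an n×n real symmetric matrix with eigenvalues λ_1 ≥ ... ≥ λ_n listed in nonincreasing order. Then for every subset T ⊆ {1,...,n} of cardinality p, the sum of the corresponding diagonal entries is bounded by the sum of the p largest eigenvalues: Σ_{i∈T} Q_{ii} ≤ Σ_{k=1}^p λ_k. -/
lemma filter_lt_card_aux {n p : ℕ} (hpn : p ≤ n) :
    (Finset.univ.filter (fun k : Fin n => (k : ℕ) < p)).card = p := by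
  have : Finset.univ.filter (fun k : Fin n => (k : ℕ) < p)
      = (Finset.univ : Finset (Fin p)).image (Fin.castLE hpn) := by
    ext k
    simp [Fin.castLE, Fin.ext_iff]
    constructor
    · intro h; exact ⟨⟨k, h⟩, rfl⟩
    · rintro ⟨a, ha⟩; exact ha ▸ a.2
  rw [this, Finset.card_image_of_injective _ (Fin.castLE_injective hpn)]
  simp

/-- Abstract majorization step: if `0 ≤ c ≤ 1` with total mass `p ≤ n`, then the
`c`-weighted sum of an antitone `lam` is at most the sum of the top `p` values. -/
lemma weighted_sum_le_top_aux {n p : ℕ} (hpn : p ≤ n) (lam : Fin n → ℝ)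
    (hlam : Antitone lam) (c : Fin n → ℝ) (hc0 : ∀ k, 0 ≤ c k) (hc1 : ∀ k, c k ≤ 1)
    (hsum : ∑ k, c k = p) :
    ∑ k, c k * lam k ≤ ∑ k ∈ Finset.univ.filter (fun k : Fin n => (k : ℕ) < p), lam k := by
  rcases Nat.eq_zero_or_pos p with hp | hp
  · subst hp
    have hzero : ∀ k ∈ Finset.univ, c k = 0 := by
      intro k _
      have := (Finset.sum_eq_zero_iff_of_nonneg (fun k _ => hc0 k)).mp (by simpa using hsum)
      exact this k (Finset.mem_univ k)
    rw [Finset.sum_congr rfl (fun k hk => by rw [hzero k hk, zero_mul])]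
    simp
  · have hn : 0 < n := lt_of_lt_of_le hp hpn
    set t : ℝ := lam ⟨p - 1, by omega⟩ with ht
    have hcard := filter_lt_card_aux hpn
    have key : ∑ k, c k * (lam k - t)
        ≤ ∑ k ∈ Finset.univ.filter (fun k : Fin n => (k : ℕ) < p), (lam k - t) := by
      rw [← Finset.sum_filter_add_sum_filter_not Finset.univ
        (fun k : Fin n => (k : ℕ) < p) (fun k => c k * (lam k - t))]
      have h1 : ∑ k ∈ Finset.univ.filter (fun k : Fin n => (k : ℕ) < p), c k * (lam k - t)
          ≤ ∑ k ∈ Finset.univ.filter (fun k : Fin n => (k : ℕ) < p), (lam k - t) := by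
        apply Finset.sum_le_sum
        intro k hk
        have hk' : (k : ℕ) < p := by simpa using hk
        have hle : t ≤ lam k := hlam (by simp [Fin.le_def]; omega)
        nlinarith [hc0 k, hc1 k]
      have h2 : ∑ k ∈ Finset.univ.filter (fun k : Fin n => ¬ (k : ℕ) < p), c k * (lam k - t)
          ≤ 0 := by
        apply Finset.sum_nonpos
        intro k hk
        have hk' : ¬ (k : ℕ) < p := by simpa using hk
        have hle : lam k ≤ t := hlam (by simp [Fin.le_def]; omega)
        nlinarith [hc0 k]
      linarith
    have expand : ∑ k, c k * lam k = (∑ k, c k * (lam k - t)) + t * p := by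
      rw [← hsum]
      rw [Finset.mul_sum, ← Finset.sum_add_distrib]
      exact Finset.sum_congr rfl fun k _ => by ring
    have rhs : ∑ k ∈ Finset.univ.filter (fun k : Fin n => (k : ℕ) < p), (lam k - t)
        = (∑ k ∈ Finset.univ.filter (fun k : Fin n => (k : ℕ) < p), lam k) - t * p := by
      rw [Finset.sum_sub_distrib, Finset.sum_const, hcard]
      ring
    linarith

/-- Schur–Horn type bound: for a real symmetric matrix `Q`
with eigenvalues `lam` listed in nonincreasing order, the sum of any `p`
diagonal entries is at most the sum of the `p` largest eigenvalues. -/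
theorem stmt4 {n : ℕ} (Q : Matrix (Fin n) (Fin n) ℝ) (hQ : Q.IsHermitian)
    (lam : Fin n → ℝ) (hlam : Antitone lam)
    (σ : Equiv.Perm (Fin n)) (hσ : ∀ i, lam (σ i) = hQ.eigenvalues i)
    (p : ℕ) (T : Finset (Fin n)) (hT : T.card = p) :
    ∑ i ∈ T, Q i i ≤ ∑ k ∈ Finset.univ.filter (fun k : Fin n => (k : ℕ) < p), lam k := by
  set U : Matrix (Fin n) (Fin n) ℝ := (hQ.eigenvectorUnitary : Matrix (Fin n) (Fin n) ℝ) with hU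
  -- diagonal entries via the spectral theorem
  have hdiag : ∀ i, Q i i = ∑ j, hQ.eigenvalues j * (U i j)^2 := by
    intro i
    conv_lhs => rw [hQ.spectral_theorem]
    simp [Matrix.mul_apply, Matrix.diagonal_apply, Finset.sum_ite_eq, hU]
    exact Finset.sum_congr rfl fun x _ => by ring
  -- row sums of squares are 1
  have hrow : ∀ i, ∑ j, (U i j)^2 = 1 := by
    intro i
    have h := Matrix.mem_unitaryGroup_iff.mp hQ.eigenvectorUnitary.2
    have := congrFun (congrFun h i) i
    simpa [Matrix.mul_apply, sq, hU] using this
  -- column sums of squares are 1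
  have hcol : ∀ j, ∑ i, (U i j)^2 = 1 := by
    intro j
    have h := Matrix.mem_unitaryGroup_iff'.mp hQ.eigenvectorUnitary.2
    have := congrFun (congrFun h j) j
    simpa [Matrix.mul_apply, sq, hU] using this
  set c : Fin n → ℝ := fun k => ∑ i ∈ T, (U i (σ.symm k))^2 with hc
  have hc0 : ∀ k, 0 ≤ c k := fun k => Finset.sum_nonneg fun i _ => sq_nonneg _
  have hc1 : ∀ k, c k ≤ 1 := by
    intro k
    calc c k ≤ ∑ i, (U i (σ.symm k))^2 :=
          Finset.sum_le_sum_of_subset_of_nonneg (Finset.subset_univ T)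
            (fun i _ _ => sq_nonneg _)
      _ = 1 := hcol _
  have hpn : p ≤ n := by
    rw [← hT]
    simpa using Finset.card_le_card (Finset.subset_univ T)
  have hsum : ∑ k, c k = p := by
    rw [hc]
    rw [Finset.sum_comm]
    have : ∀ i ∈ T, ∑ k : Fin n, (U i (σ.symm k))^2 = 1 := by
      intro i _
      exact (Equiv.sum_comp σ.symm (fun j => (U i j)^2)).trans (hrow i)
    rw [Finset.sum_congr rfl this]
    simp [hT]
  have hLHS : ∑ i ∈ T, Q i i = ∑ k, c k * lam k := by
    rw [Finset.sum_congr rfl (fun i _ => hdiag i)]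
    rw [Finset.sum_comm]
    have : ∀ j : Fin n, ∑ i ∈ T, hQ.eigenvalues j * (U i j)^2
        = lam (σ j) * ∑ i ∈ T, (U i j)^2 := by
      intro j
      rw [hσ, Finset.mul_sum]
    rw [Finset.sum_congr rfl (fun j _ => this j)]
    rw [← Equiv.sum_comp σ.symm (fun j => lam (σ j) * ∑ i ∈ T, (U i j)^2)]
    exact Finset.sum_congr rfl fun k _ => by simp [hc, mul_comm]
  rw [hLHS]
  exact weighted_sum_le_top_aux hpn lam hlam c hc0 hc1 hsum
end

section
/- Let Q̂ be an n×n real symmetric positive definite matrix and suppose x* ∈ [0,1]^n maximizes the quadratic form over the hypercube, i.e. xᵗ Q̂ x ≤ (x*)ᵗ Q̂ x* for all x ∈ [0,1]^n. Then x* is binary: x*_i ∈ {0,1} for every i. In other words, any maximizer of the continuous relaxation is automatically integral. -/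
/-!
Along the coordinate line through `x*` in direction `eᵢ` the quadratic form is strictly convex,
since `Q̂` is positive definite. If `0 < x*ᵢ < 1`, then `x*` lies strictly between the two points
of the hypercube obtained by setting its `i`-th coordinate to `0` and to `1`, so strict convexity
makes the form at `x*` smaller than at one of them, contradicting maximality.
-/

open Matrix Set

theorem Matrix.dotProduct_mulVec_combo {ι R : Type*} [Fintype ι] [CommRing R]
    (Q : Matrix ι ι R) (x y : ι → R) {a b : R} (hab : a + b = 1) :
    (a • x + b • y) ⬝ᵥ Q *ᵥ (a • x + b • y) =
      a * (x ⬝ᵥ Q *ᵥ x) + b * (y ⬝ᵥ Q *ᵥ y) - a * b * ((x - y) ⬝ᵥ Q *ᵥ (x - y)) := by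
  obtain rfl : b = 1 - a := by rw [← hab, add_sub_cancel_left]
  simp only [mulVec_add, mulVec_sub, mulVec_smul, add_dotProduct, sub_dotProduct,
    dotProduct_add, dotProduct_sub, smul_dotProduct, dotProduct_smul, smul_eq_mul]
  ring

theorem Matrix.PosDef.strictConvexOn_dotProduct_mulVec {ι : Type*} [Fintype ι]
    {Q : Matrix ι ι ℝ} (hQ : Q.PosDef) : StrictConvexOn ℝ univ fun x ↦ x ⬝ᵥ Q *ᵥ x := by
  refine ⟨convex_univ, fun x _ y _ hxy a b ha hb hab ↦ ?_⟩
  have hpos : 0 < (x - y) ⬝ᵥ Q *ᵥ (x - y) := by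
    simpa using hQ.dotProduct_mulVec_pos (sub_ne_zero.mpr hxy)
  simp only [Q.dotProduct_mulVec_combo x y hab, smul_eq_mul]
  nlinarith [mul_pos (mul_pos ha hb) hpos]

theorem mem_openSegment_update_zero_one {ι : Type*} [DecidableEq ι] {x : ι → ℝ} {i : ι}
    (h₀ : 0 < x i) (h₁ : x i < 1) :
    x ∈ openSegment ℝ (Function.update x i 0) (Function.update x i 1) := by
  refine ⟨1 - x i, x i, by linarith, h₀, by ring, funext fun j ↦ ?_⟩
  rcases eq_or_ne j i with rfl | hj
  · simp
  · simp only [Pi.add_apply, Pi.smul_apply, Function.update_of_ne hj, smul_eq_mul]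
    ring

/-- if `Q̂` is symmetric positive definite and `x*` maximizes the
quadratic form over the hypercube `[0,1]^n`, then `x*` is binary. -/
theorem stmt6 {n : ℕ} (Q : Matrix (Fin n) (Fin n) ℝ) (hQ : Q.PosDef)
    (xstar : Fin n → ℝ) (hxstar : ∀ i, 0 ≤ xstar i ∧ xstar i ≤ 1)
    (hmax : ∀ x : Fin n → ℝ, (∀ i, 0 ≤ x i ∧ x i ≤ 1) →
      x ⬝ᵥ Q.mulVec x ≤ xstar ⬝ᵥ Q.mulVec xstar) :
    ∀ i, xstar i = 0 ∨ xstar i = 1 := by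
  intro i
  by_contra! h
  have h₀ : 0 < xstar i := (hxstar i).1.lt_of_ne' h.1
  have h₁ : xstar i < 1 := (hxstar i).2.lt_of_ne h.2
  have update_mem_cube : ∀ t : ℝ, 0 ≤ t → t ≤ 1 →
      ∀ j, 0 ≤ Function.update xstar i t j ∧ Function.update xstar i t j ≤ 1 := by
    intro t ht₀ ht₁ j
    rcases eq_or_ne j i with rfl | hj
    · simp [ht₀, ht₁]
    · simpa [Function.update_of_ne hj] using hxstar j
  have hne : Function.update xstar i 0 ≠ Function.update xstar i 1 := fun heq ↦ by
    simpa using congrFun heq i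
  have hlt := hQ.strictConvexOn_dotProduct_mulVec.lt_on_openSegment (mem_univ _) (mem_univ _)
    hne (mem_openSegment_update_zero_one h₀ h₁)
  exact (lt_max_iff.mp hlt).elim
    (fun h ↦ (hmax _ (update_mem_cube 0 le_rfl zero_le_one)).not_gt h)
    (fun h ↦ (hmax _ (update_mem_cube 1 zero_le_one le_rfl)).not_gt h)
end
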